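/- Every Hirzebruch–Jung continued fraction string for p²/(pq−1) with p > q ≥ 1 coprime (all entries ≥ 2) is obtainable from the string [4] by finitely many applications of the two operations [c₁,...,c_k] ↦ [c₁+1, c₂, ..., c_k, 2] and [c₁,...,c_k] ↦ [2, c₁, ..., c_{k−1}, c_k+1]; conversely every string so obtained is the expansion of p²/(pq−1) for some coprime p > q ≥ 1. -/

import Mathlib

/-- Hirzebruch–Jung continued fraction `[a₁,…,a_k] = a₁ - 1/(a₂ - 1/(⋯ - 1/a_k))`.
Note `1/0 = 0` in `ℚ`, so `hj [a] = a`. -/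
def hj : List ℚ → ℚ
  | [] => 0
  | a :: l => a - 1 / hj l

/-- HJ continued fraction of a list of naturals. -/
def hjN (l : List ℕ) : ℚ := hj (l.map (fun x => (x : ℚ)))

/-- Strings obtainable from [4] via
[c₁,…,c_k] ↦ [c₁+1, c₂, …, c_k, 2] and [c₁,…,c_k] ↦ [2, c₁, …, c_{k−1}, c_k+1]. -/
inductive Gen1 : List ℕ → Prop
  | base : Gen1 [4]
  | left {c : ℕ} {l : List ℕ} : Gen1 (c :: l) → Gen1 ((c + 1) :: (l ++ [2]))
  | right {l : List ℕ} {c : ℕ} : Gen1 (l ++ [c]) → Gen1 (2 :: (l ++ [c + 1]))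

/-!
Attach to a string `[a₁, …, a_k]` the product `M` of the matrices `!![aᵢ, -1; 1, 0]`. For entries
`≥ 2` the continued fraction is the quotient `M₀₀ / M₁₀` of the first column, and it determines
the string. The two operations multiply `M` on both sides by fixed matrices, and they carry
`wahlMat p q = !![p², 1 + pq - p²; pq - 1, 1 + q² - pq]` to `wahlMat (p + q) q` and
`wahlMat (2p - q) p`. Every coprime pair `p > q ≥ 1` other than `(2, 1)` arises from a smaller one
in exactly one of these two ways, according as `p > 2q` or `p < 2q`, so by induction on `p` every
`wahlMat p q` is the matrix of a generated string, and injectivity of the continued fraction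
finishes the proof.
-/

def hjStep (a : ℤ) : Matrix (Fin 2) (Fin 2) ℤ := !![a, -1; 1, 0]

def hjMat (l : List ℕ) : Matrix (Fin 2) (Fin 2) ℤ := (l.map fun a : ℕ => hjStep a).prod

def wahlMat (p q : ℤ) : Matrix (Fin 2) (Fin 2) ℤ :=
  !![p ^ 2, 1 + p * q - p ^ 2; p * q - 1, 1 + q ^ 2 - p * q]

@[simp] lemma hjMat_nil : hjMat [] = 1 := rfl

@[simp] lemma hjMat_cons (a : ℕ) (l : List ℕ) : hjMat (a :: l) = hjStep a * hjMat l := rfl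

@[simp] lemma hjMat_append (l l' : List ℕ) : hjMat (l ++ l') = hjMat l * hjMat l' := by
  simp [hjMat]

lemma hjStep_add_one_eq_mul_left (a : ℤ) : hjStep (a + 1) = !![1, 1; 0, 1] * hjStep a := by
  simp [hjStep]

lemma hjStep_add_one_eq_mul_right (a : ℤ) : hjStep (a + 1) = hjStep a * !![1, 0; -1, 1] := by
  simp [hjStep]

lemma hjMat_succ_cons_append_two (c : ℕ) (l : List ℕ) :
    hjMat ((c + 1) :: (l ++ [2])) = !![1, 1; 0, 1] * hjMat (c :: l) * hjStep 2 := by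
  simp [hjStep_add_one_eq_mul_left, Matrix.mul_assoc]

lemma hjMat_two_cons_append_succ (l : List ℕ) (c : ℕ) :
    hjMat (2 :: (l ++ [c + 1])) = hjStep 2 * hjMat (l ++ [c]) * !![1, 0; -1, 1] := by
  simp [hjStep_add_one_eq_mul_right, Matrix.mul_assoc]

lemma hjMat_cons_apply_zero_zero (a : ℕ) (l : List ℕ) :
    hjMat (a :: l) 0 0 = a * hjMat l 0 0 - hjMat l 1 0 := by
  simp [hjStep, Matrix.mul_apply, Fin.sum_univ_two, sub_eq_add_neg]

lemma hjMat_cons_apply_one_zero (a : ℕ) (l : List ℕ) :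
    hjMat (a :: l) 1 0 = hjMat l 0 0 := by
  simp [hjStep, Matrix.mul_apply, Fin.sum_univ_two]

lemma wahlMat_mul_left (p q : ℤ) :
    !![1, 1; 0, 1] * wahlMat p q * hjStep 2 = wahlMat (p + q) q := by
  ext i j; fin_cases i <;> fin_cases j <;>
    simp [wahlMat, hjStep, Matrix.mul_apply, Fin.sum_univ_two] <;> ring

lemma wahlMat_mul_right (p q : ℤ) :
    hjStep 2 * wahlMat p q * !![1, 0; -1, 1] = wahlMat (2 * p - q) p := by
  ext i j; fin_cases i <;> fin_cases j <;>
    simp [wahlMat, hjStep, Matrix.mul_apply, Fin.sum_univ_two] <;> ring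

@[simp] lemma hjN_nil : hjN [] = 0 := rfl

lemma hjN_cons (a : ℕ) (l : List ℕ) : hjN (a :: l) = a - 1 / hjN l := rfl

section

variable {l : List ℕ}

lemma hjMat_apply_one_zero_mem_Ico (h : ∀ x ∈ l, 2 ≤ x) :
    hjMat l 1 0 ∈ Set.Ico 0 (hjMat l 0 0) := by
  induction l with
  | nil => simp
  | cons a l ih =>
    obtain ⟨h0, hlt⟩ := ih fun x hx => h x (List.mem_cons_of_mem a hx)
    have ha : (2 : ℤ) ≤ a := by exact_mod_cast h a List.mem_cons_self
    rw [hjMat_cons_apply_zero_zero, hjMat_cons_apply_one_zero]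
    constructor <;> nlinarith

lemma hjN_eq_div (h : ∀ x ∈ l, 2 ≤ x) : hjN l = hjMat l 0 0 / hjMat l 1 0 := by
  induction l with
  | nil => simp
  | cons a l ih =>
    have hl : ∀ x ∈ l, 2 ≤ x := fun x hx => h x (List.mem_cons_of_mem a hx)
    have hA : (hjMat l 0 0 : ℚ) ≠ 0 := by
      obtain ⟨hC, hCA⟩ := hjMat_apply_one_zero_mem_Ico hl
      exact_mod_cast (by omega : hjMat l 0 0 ≠ 0)
    rw [hjN_cons, ih hl, hjMat_cons_apply_zero_zero, hjMat_cons_apply_one_zero, one_div_div]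
    push_cast
    field_simp

lemma one_lt_hjN_cons {a : ℕ} (h : ∀ x ∈ a :: l, 2 ≤ x) : 1 < hjN (a :: l) := by
  have ha : (2 : ℚ) ≤ a := by exact_mod_cast h a List.mem_cons_self
  induction l generalizing a with
  | nil =>
    rw [hjN_cons, hjN_nil, div_zero, sub_zero]
    linarith
  | cons b l ih =>
    have hb : 1 < hjN (b :: l) :=
      ih (fun x hx => h x (List.mem_cons_of_mem a hx)) (by exact_mod_cast h b (by simp))
    rw [hjN_cons]
    linarith [(div_lt_one (by linarith)).2 hb]

lemma one_div_hjN_mem_Ico (h : ∀ x ∈ l, 2 ≤ x) : 1 / hjN l ∈ Set.Ico 0 1 := by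
  cases l with
  | nil => simp
  | cons a l =>
    have := one_lt_hjN_cons h
    exact ⟨by positivity, (div_lt_one (by linarith)).2 this⟩

-- The first entry of the string is the ceiling of its continued fraction.
lemma hjN_injOn : Set.InjOn hjN {l | ∀ x ∈ l, 2 ≤ x} := by
  intro l₁ h₁ l₂ h₂ he
  induction l₁ generalizing l₂ with
  | nil =>
    cases l₂ with
    | nil => rfl
    | cons b l₂ => linarith [one_lt_hjN_cons h₂, hjN_nil]
  | cons a l₁ ih =>
    cases l₂ with
    | nil => linarith [one_lt_hjN_cons h₁, hjN_nil]
    | cons b l₂ =>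
      have h₁' : ∀ x ∈ l₁, 2 ≤ x := fun x hx => h₁ x (List.mem_cons_of_mem a hx)
      have h₂' : ∀ x ∈ l₂, 2 ≤ x := fun x hx => h₂ x (List.mem_cons_of_mem b hx)
      obtain ⟨hx₀, hx₁⟩ := one_div_hjN_mem_Ico h₁'
      obtain ⟨hy₀, hy₁⟩ := one_div_hjN_mem_Ico h₂'
      rw [hjN_cons, hjN_cons] at he
      have hab : a = b := by
        have hlt : a < b + 1 := by exact_mod_cast (by linarith : (a : ℚ) < b + 1)
        have hgt : b < a + 1 := by exact_mod_cast (by linarith : (b : ℚ) < a + 1)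
        omega
      subst hab
      have : hjN l₁ = hjN l₂ := by simpa using he
      rw [ih h₁' h₂' this]

end

lemma hjN_eq_of_hjMat_eq_wahlMat {l : List ℕ} (h : ∀ x ∈ l, 2 ≤ x) {p q : ℕ}
    (hM : hjMat l = wahlMat p q) : hjN l = ((p ^ 2 : ℕ) : ℚ) / ((p * q - 1 : ℕ) : ℚ) := by
  have hC : 0 ≤ (p : ℤ) * q - 1 := by
    simpa [hM, wahlMat] using (hjMat_apply_one_zero_mem_Ico h).1
  have hpq : 1 ≤ p * q := by exact_mod_cast (by linarith : (1 : ℤ) ≤ p * q)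
  rw [hjN_eq_div h, hM]
  simp [wahlMat, Nat.cast_sub hpq]

namespace Gen1

variable {l : List ℕ}

lemma two_le (h : Gen1 l) : ∀ x ∈ l, 2 ≤ x := by
  induction h with
  | base => simp
  | left _ ih =>
    simp only [List.mem_cons, List.mem_append, List.not_mem_nil, or_false] at ih ⊢
    rintro x (rfl | hx | rfl)
    · exact (ih _ (Or.inl rfl)).trans (Nat.le_succ _)
    · exact ih x (Or.inr hx)
    · rfl
  | right _ ih =>
    simp only [List.mem_cons, List.mem_append, List.not_mem_nil, or_false] at ih ⊢
    rintro x (rfl | hx | rfl)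
    · rfl
    · exact ih x (Or.inl hx)
    · exact (ih _ (Or.inr rfl)).trans (Nat.le_succ _)

lemma ne_nil (h : Gen1 l) : l ≠ [] := by
  cases h <;> simp

lemma exists_hjMat_eq_wahlMat (h : Gen1 l) :
    ∃ p q : ℕ, 1 ≤ q ∧ q < p ∧ Nat.Coprime p q ∧ hjMat l = wahlMat p q := by
  induction h with
  | base => exact ⟨2, 1, le_rfl, one_lt_two, by norm_num, by simp [hjStep, wahlMat]⟩
  | @left c l _ ih =>
    obtain ⟨p, q, hq, hqp, hpq, hM⟩ := ih
    refine ⟨p + q, q, hq, by omega, Nat.coprime_add_self_left.2 hpq, ?_⟩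
    rw [hjMat_succ_cons_append_two, hM, wahlMat_mul_left]
    push_cast; rfl
  | @right l c _ ih =>
    obtain ⟨p, q, hq, hqp, hpq, hM⟩ := ih
    refine ⟨p + (p - q), p, by omega, by omega, ?_, ?_⟩
    · rw [Nat.coprime_self_add_left, Nat.coprime_self_sub_left hqp.le]
      exact hpq.symm
    · rw [hjMat_two_cons_append_succ, hM, wahlMat_mul_right]
      congr 1
      push_cast [hqp.le]
      ring

end Gen1

lemma exists_gen1_hjMat_eq_wahlMat (p q : ℕ) (hq : 1 ≤ q) (hqp : q < p)
    (hpq : Nat.Coprime p q) : ∃ l, Gen1 l ∧ hjMat l = wahlMat p q := by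
  induction p using Nat.strong_induction_on generalizing q with
  | _ p ih =>
  rcases lt_trichotomy p (2 * q) with hlt | heq | hgt
  · obtain ⟨l, hl, hM⟩ := ih q hqp (2 * q - p) (by omega) (by omega) (by
      rw [show 2 * q - p = q - (p - q) by omega, Nat.coprime_self_sub_right (by omega),
        Nat.coprime_sub_self_right hqp.le]
      exact hpq.symm)
    obtain ⟨m, c, rfl⟩ := (List.eq_nil_or_concat' l).resolve_left hl.ne_nil
    refine ⟨2 :: (m ++ [c + 1]), hl.right, ?_⟩
    rw [hjMat_two_cons_append_succ, hM, wahlMat_mul_right]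
    congr 1
    push_cast [(by omega : p ≤ 2 * q)]
    ring
  · obtain rfl : q = 1 := Nat.Coprime.eq_one_of_dvd hpq.symm ⟨2, by omega⟩
    obtain rfl : p = 2 := heq
    exact ⟨[4], Gen1.base, by simp [hjStep, wahlMat]⟩
  · obtain ⟨l, hl, hM⟩ := ih (p - q) (by omega) q hq (by omega)
      ((Nat.coprime_sub_self_left hqp.le).2 hpq)
    obtain ⟨c, m, rfl⟩ := List.exists_cons_of_ne_nil hl.ne_nil
    refine ⟨(c + 1) :: (m ++ [2]), hl.left, ?_⟩
    rw [hjMat_succ_cons_append_two, hM, wahlMat_mul_left]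
    congr 1
    push_cast [hqp.le]
    ring

theorem stmt17 (l : List ℕ) :
    Gen1 l ↔
      ((∀ x ∈ l, 2 ≤ x) ∧
        ∃ p q : ℕ, 1 ≤ q ∧ q < p ∧ Nat.Coprime p q ∧
          hjN l = ((p ^ 2 : ℕ) : ℚ) / ((p * q - 1 : ℕ) : ℚ)) := by
  constructor
  · intro hl
    obtain ⟨p, q, hq, hqp, hpq, hM⟩ := hl.exists_hjMat_eq_wahlMat
    exact ⟨hl.two_le, p, q, hq, hqp, hpq, hjN_eq_of_hjMat_eq_wahlMat hl.two_le hM⟩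
  · rintro ⟨h, p, q, hq, hqp, hpq, hv⟩
    obtain ⟨l', hl', hM⟩ := exists_gen1_hjMat_eq_wahlMat p q hq hqp hpq
    have hv' := hjN_eq_of_hjMat_eq_wahlMat hl'.two_le hM
    rwa [hjN_injOn h hl'.two_le (hv.trans hv'.symm)]
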